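/- arXiv:2101.03727 — 2 statements merged into one kernel-verified Lean document; each statement's English description precedes it below -/
import Mathlib

section
/- Let V be a real Hilbert space and F : V → V* a Fréchet differentiable map. Let û ∈ V and suppose F'[û] is invertible with ‖F'[û]⁻¹ F[û]‖_V ≤ α. Suppose D is an open set containing the closed ball B(û, 2α) and ‖F'[û]⁻¹ (F'[v] − F'[w])‖ ≤ ω ‖v − w‖_V for all v, w ∈ D. If αω ≤ 1/2, then the equation F[u] = 0 has a unique solution u in the closed ball B(û, ρ), where ρ = (1 − √(1 − 2αω))/ω. -/
/-!
Replace Newton's method by the chord iteration `u ↦ u - F'[û]⁻¹ F[u]`, whose fixed points are the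
zeros of `F` and whose derivative `F'[û]⁻¹ (F'[û] - F'[u])` has norm at most `ω ‖u - û‖`. The mean
value inequality along segments then bounds the steps of the iteration by those of the scalar
majorant `t ↦ α + ω t² / 2`, whose smallest fixed point is `ρ`; so the iterates stay in `B(û, ρ)`
and form a Cauchy sequence. For uniqueness, the strict convexity of the Hilbert norm makes the
midpoints of a chord of `B(û, ρ)` lie strictly inside it, which beats the crude contraction factor
`ωρ ≤ 1` even in the critical case `αω = 1/2`.
-/

open Metric Set Filter

lemma norm_sub_le_of_hasDerivAt_of_norm_le_quadratic {W : Type*} [NormedAddCommGroup W]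
    [NormedSpace ℝ W] {f f' : ℝ → W} {c₀ c₁ c₂ : ℝ}
    (hf : ∀ s ∈ Icc (0 : ℝ) 1, HasDerivAt f (f' s) s)
    (hf' : ∀ s ∈ Icc (0 : ℝ) 1, ‖f' s‖ ≤ c₀ + c₁ * s + c₂ * s ^ 2) :
    ‖f 1 - f 0‖ ≤ c₀ + c₁ / 2 + c₂ / 3 := by
  have hB : ∀ s : ℝ, HasDerivAt (fun s ↦ c₀ * s + c₁ * s ^ 2 / 2 + c₂ * s ^ 3 / 3)
      (c₀ + c₁ * s + c₂ * s ^ 2) s := by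
    intro s
    have h := (((hasDerivAt_id' s).const_mul c₀).add
      (((hasDerivAt_pow 2 s).const_mul c₁).div_const 2)).add
      (((hasDerivAt_pow 3 s).const_mul c₂).div_const 3)
    exact h.congr_deriv (by push_cast; ring)
  have hcont : ContinuousOn (fun s ↦ f s - f 0) (Icc 0 1) := fun s hs ↦
    ((hf s hs).continuousAt.continuousWithinAt).sub continuousWithinAt_const
  simpa using image_norm_le_of_norm_deriv_right_le_deriv_boundary hcont
    (fun s hs ↦ ((hf s (Ico_subset_Icc_self hs)).sub_const (f 0)).hasDerivWithinAt)
    (by simp) hB (fun s hs ↦ hf' s (Ico_subset_Icc_self hs)) (right_mem_Icc.2 zero_le_one)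

noncomputable def chordMajorant (α ω : ℝ) : ℕ → ℝ
  | 0 => 0
  | n + 1 => α + ω * chordMajorant α ω n ^ 2 / 2

section Majorant

variable {α ω ρ : ℝ}

lemma chordMajorant_nonneg (hα : 0 ≤ α) (hω : 0 ≤ ω) : ∀ n, 0 ≤ chordMajorant α ω n
  | 0 => le_rfl
  | n + 1 => by unfold chordMajorant; positivity

lemma monotone_chordMajorant (hα : 0 ≤ α) (hω : 0 ≤ ω) : Monotone (chordMajorant α ω) := by
  refine monotone_nat_of_le_succ fun n ↦ ?_
  induction n with
  | zero => simpa [chordMajorant] using hα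
  | succ n ih =>
    have h₀ := chordMajorant_nonneg hα hω n
    simp only [chordMajorant] at ih ⊢
    have : chordMajorant α ω n ^ 2 ≤ (α + ω * chordMajorant α ω n ^ 2 / 2) ^ 2 := by
      gcongr
    nlinarith

lemma chordMajorant_le (hα : 0 ≤ α) (hω : 0 ≤ ω) (hρ : α + ω * ρ ^ 2 / 2 = ρ) :
    ∀ n, chordMajorant α ω n ≤ ρ
  | 0 => by simp only [chordMajorant]; rw [← hρ]; positivity
  | n + 1 => by
    have := chordMajorant_le hα hω hρ n
    have h₀ := chordMajorant_nonneg hα hω n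
    simp only [chordMajorant]
    rw [← hρ]
    gcongr

end Majorant

section Chord

variable {E : Type*} [NormedAddCommGroup E] [NormedSpace ℝ E] {G : E → E}
  {G' : E → E →L[ℝ] E} {x₀ : E} {α ω ρ : ℝ}

lemma norm_sub_le_of_norm_fderiv_le_of_segment (hω : 0 ≤ ω)
    (hG : ∀ x ∈ closedBall x₀ ρ, HasFDerivAt G (G' x) x)
    (hG' : ∀ x ∈ closedBall x₀ ρ, ‖G' x‖ ≤ ω * ‖x - x₀‖)
    {x y : E} (hx : x ∈ closedBall x₀ ρ) (hy : y ∈ closedBall x₀ ρ) {c₀ c₁ c₂ : ℝ}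
    (hc : ∀ s ∈ Icc (0 : ℝ) 1, ‖x + s • (y - x) - x₀‖ ≤ c₀ + c₁ * s + c₂ * s ^ 2) :
    ‖G y - G x‖ ≤ ω * (c₀ + c₁ / 2 + c₂ / 3) * ‖y - x‖ := by
  have hseg : ∀ s ∈ Icc (0 : ℝ) 1, x + s • (y - x) ∈ closedBall x₀ ρ := fun s hs ↦
    (convex_closedBall x₀ ρ).add_smul_sub_mem hx hy hs
  have hf : ∀ s ∈ Icc (0 : ℝ) 1, HasDerivAt (fun s : ℝ ↦ G (x + s • (y - x)))
      (G' (x + s • (y - x)) (y - x)) s := fun s hs ↦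
    (hG _ (hseg s hs)).comp_hasDerivAt s
      (by simpa using ((hasDerivAt_id s).smul_const (y - x)).const_add x)
  have hf' : ∀ s ∈ Icc (0 : ℝ) 1, ‖G' (x + s • (y - x)) (y - x)‖ ≤
      ω * c₀ * ‖y - x‖ + ω * c₁ * ‖y - x‖ * s + ω * c₂ * ‖y - x‖ * s ^ 2 := fun s hs ↦
    calc ‖G' (x + s • (y - x)) (y - x)‖ ≤ ‖G' (x + s • (y - x))‖ * ‖y - x‖ := (G' _).le_opNorm _
      _ ≤ ω * (c₀ + c₁ * s + c₂ * s ^ 2) * ‖y - x‖ := by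
        gcongr
        exact (hG' _ (hseg s hs)).trans (by gcongr; exact hc s hs)
      _ = _ := by ring
  calc ‖G y - G x‖ ≤ _ := by simpa using norm_sub_le_of_hasDerivAt_of_norm_le_quadratic hf hf'
    _ = _ := by ring

lemma norm_sub_le_of_norm_fderiv_le (hω : 0 ≤ ω)
    (hG : ∀ x ∈ closedBall x₀ ρ, HasFDerivAt G (G' x) x)
    (hG' : ∀ x ∈ closedBall x₀ ρ, ‖G' x‖ ≤ ω * ‖x - x₀‖)
    {x y : E} (hx : x ∈ closedBall x₀ ρ) (hy : y ∈ closedBall x₀ ρ) :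
    ‖G y - G x‖ ≤ ω * (‖x - x₀‖ + ‖y - x₀‖) / 2 * ‖y - x‖ := by
  refine (norm_sub_le_of_norm_fderiv_le_of_segment hω hG hG' hx hy
    (c₀ := ‖x - x₀‖) (c₁ := ‖y - x₀‖ - ‖x - x₀‖) (c₂ := 0) fun s ⟨hs₀, hs₁⟩ ↦ ?_).trans_eq
    (by ring)
  calc ‖x + s • (y - x) - x₀‖ = ‖(1 - s) • (x - x₀) + s • (y - x₀)‖ := by congr 1; module
    _ ≤ ‖(1 - s) • (x - x₀)‖ + ‖s • (y - x₀)‖ := norm_add_le _ _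
    _ = (1 - s) * ‖x - x₀‖ + s * ‖y - x₀‖ := by
      rw [norm_smul, norm_smul, Real.norm_of_nonneg (sub_nonneg.2 hs₁), Real.norm_of_nonneg hs₀]
    _ = _ := by ring

lemma norm_iterate_sub_le_chordMajorant (hω : 0 ≤ ω) (hρ : α + ω * ρ ^ 2 / 2 = ρ)
    (hG : ∀ x ∈ closedBall x₀ ρ, HasFDerivAt G (G' x) x)
    (hG' : ∀ x ∈ closedBall x₀ ρ, ‖G' x‖ ≤ ω * ‖x - x₀‖) (hx₀ : ‖G x₀ - x₀‖ ≤ α) (n : ℕ) :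
    ‖G^[n] x₀ - x₀‖ ≤ chordMajorant α ω n ∧
      ‖G^[n + 1] x₀ - G^[n] x₀‖ ≤ chordMajorant α ω (n + 1) - chordMajorant α ω n := by
  have hα : 0 ≤ α := (norm_nonneg _).trans hx₀
  have hball : ∀ m, ‖G^[m] x₀ - x₀‖ ≤ chordMajorant α ω m → G^[m] x₀ ∈ closedBall x₀ ρ :=
    fun m hm ↦ by
      rw [mem_closedBall, dist_eq_norm]; exact hm.trans (chordMajorant_le hα hω hρ m)
  induction n with
  | zero => simpa [chordMajorant] using hx₀
  | succ n ih =>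
    obtain ⟨hn, hstep⟩ := ih
    have hn₁ : ‖G^[n + 1] x₀ - x₀‖ ≤ chordMajorant α ω (n + 1) := by
      calc ‖G^[n + 1] x₀ - x₀‖ ≤ ‖G^[n + 1] x₀ - G^[n] x₀‖ + ‖G^[n] x₀ - x₀‖ :=
            norm_sub_le_norm_sub_add_norm_sub _ _ _
        _ ≤ _ := by linarith
    refine ⟨hn₁, ?_⟩
    have h₀ := chordMajorant_nonneg hα hω n
    calc ‖G^[n + 2] x₀ - G^[n + 1] x₀‖ = ‖G (G^[n + 1] x₀) - G (G^[n] x₀)‖ := by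
          rw [Function.iterate_succ_apply' G (n + 1), Function.iterate_succ_apply' G n]
      _ ≤ ω * (‖G^[n] x₀ - x₀‖ + ‖G^[n + 1] x₀ - x₀‖) / 2 * ‖G^[n + 1] x₀ - G^[n] x₀‖ :=
          norm_sub_le_of_norm_fderiv_le hω hG hG' (hball n hn) (hball _ hn₁)
      _ ≤ ω * (chordMajorant α ω n + chordMajorant α ω (n + 1)) / 2 *
            (chordMajorant α ω (n + 1) - chordMajorant α ω n) := by
          have h₁ := chordMajorant_nonneg hα hω (n + 1)
          gcongr
      _ = _ := by simp only [chordMajorant]; ring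

lemma exists_isFixedPt_mem_closedBall [CompleteSpace E] (hω : 0 ≤ ω)
    (hρ : α + ω * ρ ^ 2 / 2 = ρ) (hG : ∀ x ∈ closedBall x₀ ρ, HasFDerivAt G (G' x) x)
    (hG' : ∀ x ∈ closedBall x₀ ρ, ‖G' x‖ ≤ ω * ‖x - x₀‖) (hx₀ : ‖G x₀ - x₀‖ ≤ α) :
    ∃ x ∈ closedBall x₀ ρ, Function.IsFixedPt G x := by
  have hα : 0 ≤ α := (norm_nonneg _).trans hx₀
  have hiter := norm_iterate_sub_le_chordMajorant hω hρ hG hG' hx₀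
  have hsum : Summable fun n ↦ chordMajorant α ω (n + 1) - chordMajorant α ω n := by
    refine summable_of_sum_range_le (c := ρ)
      (fun n ↦ sub_nonneg.2 (monotone_chordMajorant hα hω n.le_succ)) fun n ↦ ?_
    rw [Finset.sum_range_sub (chordMajorant α ω)]
    simpa [chordMajorant] using chordMajorant_le hα hω hρ n
  obtain ⟨x, hx⟩ := cauchySeq_tendsto_of_complete <|
    cauchySeq_of_dist_le_of_summable (f := fun n ↦ G^[n] x₀) _
      (fun n ↦ by rw [dist_comm, dist_eq_norm]; exact (hiter n).2) hsum
  have hxρ : x ∈ closedBall x₀ ρ := isClosed_closedBall.mem_of_tendsto hx <|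
    Eventually.of_forall fun n ↦ by
      rw [mem_closedBall, dist_eq_norm]
      exact (hiter n).1.trans (chordMajorant_le hα hω hρ n)
  refine ⟨x, hxρ, tendsto_nhds_unique ((hG x hxρ).continuousAt.tendsto.comp hx) ?_⟩
  simpa only [Function.comp_def, ← Function.iterate_succ_apply' G] using
    hx.comp (tendsto_add_atTop_nat 1)

end Chord

section Hilbert

variable {H : Type*} [NormedAddCommGroup H] [InnerProductSpace ℝ H] {G : H → H}
  {G' : H → H →L[ℝ] H} {x₀ : H} {ω ρ : ℝ}

lemma norm_convexCombination_le_sub {p q : H} {s : ℝ} (hρ : 0 < ρ) (hp : ‖p‖ ≤ ρ) (hq : ‖q‖ ≤ ρ)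
    (hs : s ∈ Icc (0 : ℝ) 1) :
    ‖(1 - s) • p + s • q‖ ≤ ρ - s * (1 - s) * ‖q - p‖ ^ 2 / (2 * ρ) := by
  obtain ⟨hs₀, hs₁⟩ := hs
  set e := ‖q - p‖
  have hsq : ‖(1 - s) • p + s • q‖ ^ 2 = (1 - s) * ‖p‖ ^ 2 + s * ‖q‖ ^ 2 - s * (1 - s) * e ^ 2 := by
    rw [norm_add_sq_real, real_inner_smul_left, real_inner_smul_right, norm_smul, norm_smul,
      Real.norm_of_nonneg (sub_nonneg.2 hs₁), Real.norm_of_nonneg hs₀, norm_sub_sq_real,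
      real_inner_comm]
    ring
  have he : e ≤ 2 * ρ := (norm_sub_le q p).trans (by linarith)
  have hse : s * (1 - s) * e ^ 2 ≤ ρ ^ 2 := by
    nlinarith [sq_nonneg (2 * s - 1), norm_nonneg (q - p), mul_nonneg hs₀ (sub_nonneg.2 hs₁)]
  set c := s * (1 - s) * e ^ 2 / (2 * ρ)
  have hc : c * (2 * ρ) = s * (1 - s) * e ^ 2 := div_mul_cancel₀ _ (by positivity)
  have hc_le : c ≤ ρ / 2 := by nlinarith
  apply le_of_pow_le_pow_left₀ two_ne_zero (by linarith)
  rw [hsq]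
  nlinarith [mul_le_mul_of_nonneg_left (pow_le_pow_left₀ (norm_nonneg p) hp 2) (sub_nonneg.2 hs₁),
    mul_le_mul_of_nonneg_left (pow_le_pow_left₀ (norm_nonneg q) hq 2) hs₀, sq_nonneg c]

lemma norm_sub_le_of_norm_fderiv_le_inner (hω : 0 ≤ ω) (hρ : 0 < ρ)
    (hG : ∀ x ∈ closedBall x₀ ρ, HasFDerivAt G (G' x) x)
    (hG' : ∀ x ∈ closedBall x₀ ρ, ‖G' x‖ ≤ ω * ‖x - x₀‖)
    {x y : H} (hx : x ∈ closedBall x₀ ρ) (hy : y ∈ closedBall x₀ ρ) :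
    ‖G y - G x‖ ≤ ω * (ρ - ‖y - x‖ ^ 2 / (12 * ρ)) * ‖y - x‖ := by
  -- `∫₀¹ (ρ - s (1 - s) ‖y - x‖² / (2ρ)) ds = ρ - ‖y - x‖² / (12ρ)`
  refine (norm_sub_le_of_norm_fderiv_le_of_segment hω hG hG' hx hy (c₀ := ρ)
    (c₁ := -(‖y - x‖ ^ 2 / (2 * ρ))) (c₂ := ‖y - x‖ ^ 2 / (2 * ρ)) fun s hs ↦ ?_).trans_eq
    (by field_simp; ring)
  rw [mem_closedBall, dist_eq_norm] at hx hy
  calc ‖x + s • (y - x) - x₀‖ = ‖(1 - s) • (x - x₀) + s • (y - x₀)‖ := by congr 1; module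
    _ ≤ ρ - s * (1 - s) * ‖(y - x₀) - (x - x₀)‖ ^ 2 / (2 * ρ) :=
      norm_convexCombination_le_sub hρ hx hy hs
    _ = _ := by rw [sub_sub_sub_cancel_right]; ring

lemma eq_of_isFixedPt_mem_closedBall (hω : 0 ≤ ω) (hρ : 0 < ρ) (hωρ : ω * ρ ≤ 1)
    (hG : ∀ x ∈ closedBall x₀ ρ, HasFDerivAt G (G' x) x)
    (hG' : ∀ x ∈ closedBall x₀ ρ, ‖G' x‖ ≤ ω * ‖x - x₀‖)
    {x y : H} (hx : x ∈ closedBall x₀ ρ) (hy : y ∈ closedBall x₀ ρ) (hGx : Function.IsFixedPt G x)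
    (hGy : Function.IsFixedPt G y) : x = y := by
  have h := norm_sub_le_of_norm_fderiv_le_inner hω hρ hG hG' hx hy
  rw [hGx, hGy] at h
  by_contra hne
  have he : 0 < ‖y - x‖ := norm_pos_iff.2 (sub_ne_zero.2 (Ne.symm hne))
  have hd : 0 < ‖y - x‖ ^ 2 / (12 * ρ) := by positivity
  have h₁ : 1 ≤ ω * (ρ - ‖y - x‖ ^ 2 / (12 * ρ)) := le_of_mul_le_mul_right (by simpa using h) he
  have hω₀ : 0 < ω := hω.lt_of_ne (by rintro rfl; norm_num at h₁)
  nlinarith [mul_pos hω₀ hd]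

end Hilbert

lemma kantorovich_radius_spec {α ω ρ : ℝ} (hα : 0 < α) (hω : 0 < ω) (hαω : α * ω ≤ 1 / 2)
    (hρ : ω * ρ = 1 - √(1 - 2 * α * ω)) :
    0 < ρ ∧ ρ ≤ 2 * α ∧ ω * ρ ≤ 1 ∧ α + ω * ρ ^ 2 / 2 = ρ := by
  set σ := √(1 - 2 * α * ω)
  have hσ₀ : 0 ≤ σ := Real.sqrt_nonneg _
  have hσ : σ ^ 2 = 1 - 2 * α * ω := Real.sq_sqrt (by linarith)
  have hσ₁ : σ < 1 := by nlinarith [mul_pos hα hω]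
  refine ⟨pos_of_mul_pos_right (by linarith) hω.le, ?_, by linarith, ?_⟩
  · nlinarith
  · apply mul_left_cancel₀ hω.ne'
    nlinarith

theorem stmt_0_general
    {V : Type*} [NormedAddCommGroup V] [InnerProductSpace ℝ V] [CompleteSpace V]
    (F : V → StrongDual ℝ V) (F' : V → V →L[ℝ] StrongDual ℝ V)
    (D : Set V)
    (hdiff : ∀ u ∈ D, HasFDerivAt F (F' u) u)
    (uh : V)
    (Finv : StrongDual ℝ V →L[ℝ] V)
    (hlinv : ∀ v : V, Finv (F' uh v) = v)
    (hrinv : ∀ φ : StrongDual ℝ V, F' uh (Finv φ) = φ)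
    (α ω : ℝ) (hα : 0 < α) (hω : 0 < ω)
    (hres : ‖Finv (F uh)‖ ≤ α)
    (hball : closedBall uh (2 * α) ⊆ D)
    (hLip : ∀ v ∈ D, ∀ w ∈ D, ‖Finv.comp (F' v - F' w)‖ ≤ ω * ‖v - w‖)
    (hαω : α * ω ≤ 1 / 2) :
    ∃! u : V, u ∈ closedBall uh ((1 - Real.sqrt (1 - 2 * α * ω)) / ω) ∧ F u = 0 := by
  set ρ := (1 - √(1 - 2 * α * ω)) / ω
  obtain ⟨hρ, hρα, hωρ, hρfix⟩ := kantorovich_radius_spec hα hω hαω (mul_div_cancel₀ _ hω.ne')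
  have hD : closedBall uh ρ ⊆ D := (closedBall_subset_closedBall hρα).trans hball
  set G : V → V := fun x ↦ x - Finv (F x)
  have hG : ∀ x ∈ closedBall uh ρ, HasFDerivAt G (Finv.comp (F' uh - F' x)) x := by
    intro x hx
    refine ((hasFDerivAt_id x).sub (Finv.hasFDerivAt.comp x (hdiff x (hD hx)))).congr_fderiv ?_
    ext v
    simp [hlinv]
  have hG' : ∀ x ∈ closedBall uh ρ, ‖Finv.comp (F' uh - F' x)‖ ≤ ω * ‖x - uh‖ := fun x hx ↦
    norm_sub_rev x uh ▸ hLip uh (hD (mem_closedBall_self hρ.le)) x (hD hx)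
  have hfix : ∀ x, Function.IsFixedPt G x ↔ F x = 0 := fun x ↦ by
    refine sub_eq_self.trans ⟨fun h ↦ ?_, fun h ↦ by simp [h]⟩
    rw [← hrinv (F x), h, map_zero]
  obtain ⟨u, hu, hGu⟩ := exists_isFixedPt_mem_closedBall hω.le hρfix hG hG'
    (by simpa [G] using hres)
  exact ⟨u, ⟨hu, (hfix u).1 hGu⟩, fun v ⟨hv, hFv⟩ ↦
    eq_of_isFixedPt_mem_closedBall hω.le hρ hωρ hG hG' hv hu ((hfix v).2 hFv) hGu⟩

/-- Newton–Kantorovich theorem in a real Hilbert space: if `F'[uh]` is invertible,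
`‖F'[uh]⁻¹ F[uh]‖ ≤ α`, `F'[uh]⁻¹ ∘ (F'[v] - F'[w])` is `ω`-Lipschitz on an open set `D`
containing the closed ball `B(uh, 2α)`, and `αω ≤ 1/2`, then `F[u] = 0` has a unique
solution in the closed ball `B(uh, ρ)` with `ρ = (1 - √(1 - 2αω))/ω`. -/
theorem stmt_0
    {V : Type*} [NormedAddCommGroup V] [InnerProductSpace ℝ V] [CompleteSpace V]
    (F : V → StrongDual ℝ V) (F' : V → V →L[ℝ] StrongDual ℝ V)
    (D : Set V) (hD : IsOpen D)
    (hdiff : ∀ u ∈ D, HasFDerivAt F (F' u) u)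
    (uh : V) (huhD : uh ∈ D)
    (Finv : StrongDual ℝ V →L[ℝ] V)
    (hlinv : ∀ v : V, Finv (F' uh v) = v)
    (hrinv : ∀ φ : StrongDual ℝ V, F' uh (Finv φ) = φ)
    (α ω : ℝ) (hα : 0 < α) (hω : 0 < ω)
    (hres : ‖Finv (F uh)‖ ≤ α)
    (hball : closedBall uh (2 * α) ⊆ D)
    (hLip : ∀ v ∈ D, ∀ w ∈ D, ‖Finv.comp (F' v - F' w)‖ ≤ ω * ‖v - w‖)
    (hαω : α * ω ≤ 1 / 2) :
    ∃! u : V, u ∈ closedBall uh ((1 - Real.sqrt (1 - 2 * α * ω)) / ω) ∧ F u = 0 :=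
  stmt_0_general F F' D hdiff uh Finv hlinv hrinv α ω hα hω hres hball hLip hαω
end

section
/- Let V be a separable Hilbert space with symmetric, coercive bilinear forms a and b on V, where the norm ‖·‖_b is compact relative to ‖·‖_a. Let V_h ⊆ V be a finite-dimensional subspace and P_h : V → V_h the a-orthogonal projection. Suppose ‖u − P_h u‖_b ≤ C ‖u − P_h u‖_a for all u ∈ V. Let λ₁ ≤ λ₂ ≤ ⋯ be the eigenvalues of the problem a(u,v) = λ b(u,v) on V, and λ_{h,1} ≤ ⋯ ≤ λ_{h,n} those of the discretized problem on V_h (n = dim V_h). Then for each i = 1, …, n, λ_i ≥ λ_{h,i} / (1 + C² λ_{h,i}). -/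
/-!
Fix a trial space `E` of dimension `i + 1` for `λᵢ` and let `s` be the largest Rayleigh quotient
on `E`. If `C²s ≥ 1` the bound is trivial, since `x / (1 + C²x) < 1 / C²`. Otherwise, for `u ∈ E`,
the Pythagoras identity `‖u‖ₐ² = ‖Pₕu‖ₐ² + ‖u - Pₕu‖ₐ²`, the triangle inequality
`‖u‖_b ≤ ‖Pₕu‖_b + C‖u - Pₕu‖ₐ` and `‖u‖ₐ² ≤ s‖u‖_b²` combine into
`‖Pₕu‖ₐ² (1 - C²s) ≤ s‖Pₕu‖_b²`. Hence `Pₕ` is injective on `E`, `Pₕ(E) ⊆ Vₕ` is a trial space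
for `λₕ,ᵢ`, and `λₕ,ᵢ (1 - C²s) ≤ s`, which rearranges to `λₕ,ᵢ / (1 + C²λₕ,ᵢ) ≤ s`.
-/

open Module
open LinearMap (BilinForm)

namespace LinearMap.BilinForm

variable {V : Type*} [AddCommGroup V] [Module ℝ V]

theorem exists_eq_of_linear_left_of_symm (a : V → V → ℝ)
    (hlin : ∀ (c : ℝ) (u v w : V), a (c • u + v) w = c * a u w + a v w)
    (hsymm : ∀ u v, a u v = a v u) : ∃ A : BilinForm ℝ V, a = fun u v => A u v := by
  have hzero : ∀ w, a 0 w = 0 := fun w => by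
    have h := hlin 1 0 0 w
    rw [one_smul, add_zero] at h
    linarith
  have hadd : ∀ u v w, a (u + v) w = a u w + a v w := fun u v w => by
    simpa using hlin 1 u v w
  have hsmul : ∀ (c : ℝ) u w, a (c • u) w = c * a u w := fun c u w => by
    simpa [hzero] using hlin c u 0 w
  exact ⟨LinearMap.mk₂ ℝ a hadd hsmul
    (fun u v w => by rw [hsymm, hadd, hsymm v, hsymm w])
    (fun c u v => by rw [hsymm, hsmul, hsymm v, smul_eq_mul]), rfl⟩

variable (B : BilinForm ℝ V)

theorem sqrt_apply_add_le (hB : ∀ x, 0 ≤ B x x) (hsymm : ∀ x y, B x y = B y x) (x y : V) :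
    √(B (x + y) (x + y)) ≤ √(B x x) + √(B y y) := by
  have hcs : B x y ≤ √(B x x) * √(B y y) := by
    rw [← Real.sqrt_mul (hB x)]
    refine (le_abs_self _).trans (Real.abs_le_sqrt ?_)
    simpa [sq, hsymm y x] using B.apply_mul_apply_le_of_forall_zero_le hB x y
  rw [Real.sqrt_le_iff]
  refine ⟨by positivity, ?_⟩
  simp only [map_add, LinearMap.add_apply, hsymm y x]
  nlinarith [Real.sq_sqrt (hB x), Real.sq_sqrt (hB y)]

theorem apply_add_add_of_apply_eq_zero (hsymm : ∀ x y, B x y = B y x) {x y : V}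
    (h : B x y = 0) : B (x + y) (x + y) = B x x + B y y := by
  simp only [map_add, LinearMap.add_apply, hsymm y x, h, add_zero, zero_add]

variable {B}

theorem apply_self_nonneg_of_pos (hpos : ∀ x, x ≠ 0 → 0 < B x x) (x : V) : 0 ≤ B x x := by
  rcases eq_or_ne x 0 with rfl | hx
  · simp
  · exact (hpos x hx).le

theorem eq_of_forall_apply_sub_eq_zero (hpos : ∀ x, x ≠ 0 → 0 < B x x) {W : Submodule ℝ V}
    {u x y : V} (hx : x ∈ W) (hy : y ∈ W) (hxo : ∀ w ∈ W, B (u - x) w = 0)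
    (hyo : ∀ w ∈ W, B (u - y) w = 0) : x = y := by
  by_contra hne
  have hxy : B (x - y) (x - y) = B (u - y) (x - y) - B (u - x) (x - y) := by
    rw [← LinearMap.sub_apply, ← map_sub, sub_sub_sub_cancel_left]
  have hmem := W.sub_mem hx hy
  linarith [hpos _ (sub_ne_zero.2 hne), hxo _ hmem, hyo _ hmem]

/-- A `B`-orthogonal projection onto a subspace is linear. -/
theorem exists_linearMap_eq_of_forall_apply_sub_eq_zero (hpos : ∀ x, x ≠ 0 → 0 < B x x)
    {W : Submodule ℝ V} (P : V → V) (hmem : ∀ u, P u ∈ W)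
    (horth : ∀ u, ∀ w ∈ W, B (u - P u) w = 0) : ∃ L : V →ₗ[ℝ] V, ⇑L = P :=
  ⟨{ toFun := P
     map_add' := fun u v => eq_of_forall_apply_sub_eq_zero hpos (hmem _)
        (W.add_mem (hmem u) (hmem v)) (horth _) fun w hw => by
          rw [add_sub_add_comm, map_add, LinearMap.add_apply, horth u w hw, horth v w hw,
            add_zero]
     map_smul' := fun c u => eq_of_forall_apply_sub_eq_zero hpos (hmem _)
        (W.smul_mem c (hmem u)) (horth _) fun w hw => by
          rw [RingHom.id_apply, ← smul_sub, map_smul, LinearMap.smul_apply, horth u w hw,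
            smul_zero] }, rfl⟩

end LinearMap.BilinForm

theorem div_one_add_mul_le_of_mul_one_sub_le {x k s : ℝ} (hx : 0 ≤ x) (hk : 0 ≤ k)
    (h : x * (1 - k * s) ≤ s) : x / (1 + k * x) ≤ s := by
  rw [div_le_iff₀ (by positivity)]
  linarith

theorem sq_mul_one_sub_le_of_sq_add_sq_le {α β ε C s : ℝ} (hCs : C ^ 2 * s ≤ 1)
    (h : α ^ 2 + ε ^ 2 ≤ s * (β + C * ε) ^ 2) : α ^ 2 * (1 - C ^ 2 * s) ≤ s * β ^ 2 := by
  -- `s β² - (1 - C²s)(s (β + Cε)² - ε²) = (sCβ - (1 - C²s)ε)²`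
  nlinarith [sq_nonneg (s * C * β - (1 - C ^ 2 * s) * ε),
    mul_le_mul_of_nonneg_left h (sub_nonneg.2 hCs)]

section

variable {V : Type*} [AddCommGroup V] [Module ℝ V]

def rayleighSet (A B : BilinForm ℝ V) (E : Submodule ℝ V) : Set ℝ :=
  {r : ℝ | ∃ u ∈ E, u ≠ 0 ∧ r = A u u / B u u}

def minmaxSet (A B : BilinForm ℝ V) (W : Submodule ℝ V) (k : ℕ) : Set ℝ :=
  {s : ℝ | ∃ E : Submodule ℝ V, E ≤ W ∧ finrank ℝ E = k ∧ s = sSup (rayleighSet A B E)}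

theorem Submodule.exists_le_finrank_eq {W : Submodule ℝ V} {k : ℕ} (hk : k ≤ finrank ℝ W) :
    ∃ F ≤ W, finrank ℝ F = k := by
  obtain ⟨f, hf⟩ := exists_linearIndependent_of_le_finrank hk
  refine ⟨span ℝ (Set.range (W.subtype ∘ f)), span_le.2 ?_, ?_⟩
  · rintro _ ⟨j, rfl⟩
    exact (f j).2
  · rw [finrank_span_eq_card (hf.map' W.subtype W.ker_subtype), Fintype.card_fin]

section Rayleigh

variable (A B : BilinForm ℝ V)

theorem rayleighSet_nonempty {E : Submodule ℝ V} (hE : 0 < finrank ℝ E) :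
    (rayleighSet A B E).Nonempty := by
  have := Module.finite_of_finrank_pos hE
  obtain ⟨x, hx⟩ := Module.finrank_pos_iff_exists_ne_zero.mp hE
  exact ⟨_, x, x.2, by exact_mod_cast hx, rfl⟩

variable {A B}

theorem sSup_rayleighSet_nonneg (hA : ∀ u, 0 ≤ A u u) (hB : ∀ u, 0 ≤ B u u) (E : Submodule ℝ V) :
    0 ≤ sSup (rayleighSet A B E) :=
  Real.sSup_nonneg fun _ ⟨u, _, _, hr⟩ => hr ▸ div_nonneg (hA u) (hB u)

theorem bddBelow_minmaxSet (hA : ∀ u, 0 ≤ A u u) (hB : ∀ u, 0 ≤ B u u) (W : Submodule ℝ V)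
    (k : ℕ) : BddBelow (minmaxSet A B W k) :=
  ⟨0, fun _ ⟨E, _, _, hs⟩ => hs ▸ sSup_rayleighSet_nonneg hA hB E⟩

theorem sInf_minmaxSet_nonneg (hA : ∀ u, 0 ≤ A u u) (hB : ∀ u, 0 ≤ B u u) (W : Submodule ℝ V)
    (k : ℕ) : 0 ≤ sInf (minmaxSet A B W k) :=
  Real.sInf_nonneg fun _ ⟨E, _, _, hs⟩ => hs ▸ sSup_rayleighSet_nonneg hA hB E

end Rayleigh

section Projection

variable {A B : BilinForm ℝ V} {P : V →ₗ[ℝ] V} {C s : ℝ}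

theorem eq_zero_of_proj_eq_zero (hApos : ∀ u, u ≠ 0 → 0 < A u u)
    (herr : ∀ u, √(B (u - P u) (u - P u)) ≤ C * √(A (u - P u) (u - P u)))
    (hs : 0 ≤ s) (hCs : C ^ 2 * s < 1) {u : V} (hu : A u u ≤ s * B u u) (hPu : P u = 0) :
    u = 0 := by
  by_contra hne
  have hAu := hApos u hne
  have hBu : B u u ≤ C ^ 2 * A u u := by
    have h := Real.sqrt_le_iff.mp (herr u)
    rw [hPu, sub_zero, mul_pow, Real.sq_sqrt hAu.le] at h
    exact h.2
  nlinarith [mul_le_mul_of_nonneg_left hBu hs]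

theorem apply_proj_mul_one_sub_le (hA : ∀ u, 0 ≤ A u u) (hAsymm : ∀ u v, A u v = A v u)
    (hB : ∀ u, 0 ≤ B u u) (hBsymm : ∀ u v, B u v = B v u) (horth : ∀ u, A (u - P u) (P u) = 0)
    (herr : ∀ u, √(B (u - P u) (u - P u)) ≤ C * √(A (u - P u) (u - P u)))
    (hs : 0 ≤ s) (hCs : C ^ 2 * s ≤ 1) {u : V} (hu : A u u ≤ s * B u u) :
    A (P u) (P u) * (1 - C ^ 2 * s) ≤ s * B (P u) (P u) := by
  have hsplit : u = P u + (u - P u) := (add_sub_cancel _ _).symm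
  have hpyth : A u u = A (P u) (P u) + A (u - P u) (u - P u) := by
    rw [hsplit, A.apply_add_add_of_apply_eq_zero hAsymm ((hAsymm _ _).trans (horth u)),
      ← hsplit]
  have htri : √(B u u) ≤ √(B (P u) (P u)) + C * √(A (u - P u) (u - P u)) := by
    calc √(B u u) ≤ √(B (P u) (P u)) + √(B (u - P u) (u - P u)) := by
          conv_lhs => rw [hsplit]
          exact B.sqrt_apply_add_le hB hBsymm _ _
      _ ≤ _ := by gcongr; exact herr u
  have hBu := (Real.sqrt_le_iff.mp htri).2
  rw [← Real.sq_sqrt (hA (P u)), ← Real.sq_sqrt (hB (P u))]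
  refine sq_mul_one_sub_le_of_sq_add_sq_le (ε := √(A (u - P u) (u - P u))) hCs ?_
  rw [Real.sq_sqrt (hA (P u)), Real.sq_sqrt (hA _), ← hpyth]
  exact hu.trans (mul_le_mul_of_nonneg_left hBu hs)

theorem injective_proj_comp_subtype (hApos : ∀ u, u ≠ 0 → 0 < A u u)
    (herr : ∀ u, √(B (u - P u) (u - P u)) ≤ C * √(A (u - P u) (u - P u)))
    (hs : 0 ≤ s) (hCs : C ^ 2 * s < 1) {E : Submodule ℝ V} (hE : ∀ u ∈ E, A u u ≤ s * B u u) :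
    Function.Injective (P ∘ₗ E.subtype) :=
  (injective_iff_map_eq_zero _).2 fun x hx =>
    Subtype.ext (eq_zero_of_proj_eq_zero hApos herr hs hCs (hE x x.2) hx)

theorem sSup_rayleighSet_range_mul_le (hA : ∀ u, 0 ≤ A u u) (hAsymm : ∀ u v, A u v = A v u)
    (hBpos : ∀ u, u ≠ 0 → 0 < B u u) (hBsymm : ∀ u v, B u v = B v u)
    (horth : ∀ u, A (u - P u) (P u) = 0)
    (herr : ∀ u, √(B (u - P u) (u - P u)) ≤ C * √(A (u - P u) (u - P u)))
    (hs : 0 ≤ s) (hCs : C ^ 2 * s < 1) {E : Submodule ℝ V} (hE : ∀ u ∈ E, A u u ≤ s * B u u)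
    (hne : (rayleighSet A B (LinearMap.range (P ∘ₗ E.subtype))).Nonempty) :
    sSup (rayleighSet A B (LinearMap.range (P ∘ₗ E.subtype))) * (1 - C ^ 2 * s) ≤ s := by
  rw [← le_div_iff₀ (by linarith)]
  refine csSup_le hne ?_
  rintro _ ⟨_, ⟨x, rfl⟩, hx0, rfl⟩
  rw [le_div_iff₀ (by linarith), div_mul_eq_mul_div, div_le_iff₀ (hBpos _ hx0)]
  exact apply_proj_mul_one_sub_le hA hAsymm (B.apply_self_nonneg_of_pos hBpos) hBsymm horth herr
    hs hCs.le (hE x x.2)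

end Projection

end

section Normed

variable {V : Type*} [NormedAddCommGroup V] [NormedSpace ℝ V] {A B : BilinForm ℝ V}

theorem bddAbove_rayleighSet (hBpos : ∀ u, u ≠ 0 → 0 < B u u) (E : Submodule ℝ V)
    [FiniteDimensional ℝ E] : BddAbove (rayleighSet A B E) := by
  have hcont (F : BilinForm ℝ V) : Continuous fun x : E => F x x :=
    (F.compl₁₂ E.subtype E.subtype).toContinuousBilinearMap.continuous.clm_apply continuous_id
  have hcompact : IsCompact ((fun x : E => A x x / B x x) '' Metric.sphere 0 1) :=
    (isCompact_sphere 0 1).image_of_continuousOn <|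
      (hcont A).continuousOn.div (hcont B).continuousOn fun x hx =>
        (hBpos x (by simpa using ne_zero_of_mem_unit_sphere ⟨x, hx⟩)).ne'
  -- every Rayleigh quotient is attained on the unit sphere, by homogeneity
  refine hcompact.bddAbove.mono ?_
  rintro _ ⟨u, hu, hu0, rfl⟩
  have hn : ‖u‖⁻¹ ≠ 0 := inv_ne_zero (norm_ne_zero_iff.2 hu0)
  refine ⟨‖u‖⁻¹ • ⟨u, hu⟩, by simp [norm_smul, hu0], ?_⟩
  simp only [Submodule.coe_smul, map_smul, LinearMap.smul_apply, smul_eq_mul]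
  rw [← mul_assoc, ← mul_assoc, mul_div_mul_left _ _ (mul_ne_zero hn hn)]

theorem apply_le_sSup_rayleighSet_mul (hBpos : ∀ u, u ≠ 0 → 0 < B u u) (E : Submodule ℝ V)
    [FiniteDimensional ℝ E] {u : V} (hu : u ∈ E) : A u u ≤ sSup (rayleighSet A B E) * B u u := by
  rcases eq_or_ne u 0 with rfl | hu0
  · simp
  · rw [← div_le_iff₀ (hBpos u hu0)]
    exact le_csSup (bddAbove_rayleighSet hBpos E) ⟨u, hu, hu0, rfl⟩

theorem sInf_minmaxSet_mul_one_sub_le (hApos : ∀ u, u ≠ 0 → 0 < A u u)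
    (hAsymm : ∀ u v, A u v = A v u) (hBpos : ∀ u, u ≠ 0 → 0 < B u u)
    (hBsymm : ∀ u v, B u v = B v u) {W : Submodule ℝ V} {P : V →ₗ[ℝ] V} {C : ℝ}
    (hmem : ∀ u, P u ∈ W) (horth : ∀ u, A (u - P u) (P u) = 0)
    (herr : ∀ u, √(B (u - P u) (u - P u)) ≤ C * √(A (u - P u) (u - P u)))
    {k : ℕ} (hk : 0 < k) {E : Submodule ℝ V} (hE : finrank ℝ E = k) :
    sInf (minmaxSet A B W k) * (1 - C ^ 2 * sSup (rayleighSet A B E)) ≤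
      sSup (rayleighSet A B E) := by
  have : FiniteDimensional ℝ E := .of_finrank_pos (hE ▸ hk)
  have hA := A.apply_self_nonneg_of_pos hApos
  have hB := B.apply_self_nonneg_of_pos hBpos
  set s := sSup (rayleighSet A B E)
  have hs : 0 ≤ s := sSup_rayleighSet_nonneg hA hB E
  rcases le_or_gt 1 (C ^ 2 * s) with hCs | hCs
  · nlinarith [sInf_minmaxSet_nonneg hA hB W k]
  -- now `P` maps `E` injectively into `W`, so `P(E)` competes in the min-max
  have hEs : ∀ u ∈ E, A u u ≤ s * B u u := fun u hu => apply_le_sSup_rayleighSet_mul hBpos E hu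
  have hrank : finrank ℝ (LinearMap.range (P ∘ₗ E.subtype)) = k :=
    (LinearMap.finrank_range_of_inj (injective_proj_comp_subtype hApos herr hs hCs hEs)).trans hE
  have hle : LinearMap.range (P ∘ₗ E.subtype) ≤ W := by
    rintro _ ⟨x, rfl⟩
    exact hmem x
  calc sInf (minmaxSet A B W k) * (1 - C ^ 2 * s)
      ≤ sSup (rayleighSet A B (LinearMap.range (P ∘ₗ E.subtype))) * (1 - C ^ 2 * s) := by
        gcongr
        exact csInf_le (bddBelow_minmaxSet hA hB W k) ⟨_, hle, hrank, rfl⟩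
    _ ≤ s := sSup_rayleighSet_range_mul_le hA hAsymm hBpos hBsymm horth herr hs hCs hEs
        (rayleighSet_nonempty A B (hrank ▸ hk))

end Normed

theorem stmt_4_general {V : Type*} [NormedAddCommGroup V] [InnerProductSpace ℝ V]
    (a b : V → V → ℝ)
    (ha_bilin : ∀ (c : ℝ) (u v w : V), a (c • u + v) w = c * a u w + a v w)
    (hb_bilin : ∀ (c : ℝ) (u v w : V), b (c • u + v) w = c * b u w + b v w)
    (ha_symm : ∀ u v, a u v = a v u) (hb_symm : ∀ u v, b u v = b v u)
    (ha_pos : ∀ u, u ≠ 0 → 0 < a u u) (hb_pos : ∀ u, u ≠ 0 → 0 < b u u)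
    (Vh : Submodule ℝ V)
    (n : ℕ) (hn : n = Module.finrank ℝ Vh)
    (Ph : V → V) (hPh_mem : ∀ u, Ph u ∈ Vh)
    (hPh_orth : ∀ u : V, ∀ vh ∈ Vh, a (u - Ph u) vh = 0)
    (C : ℝ)
    (herr : ∀ u : V,
      Real.sqrt (b (u - Ph u) (u - Ph u)) ≤ C * Real.sqrt (a (u - Ph u) (u - Ph u)))
    (lam lamh : ℕ → ℝ)
    (hlam : ∀ i : ℕ, lam i = sInf {s : ℝ | ∃ E : Submodule ℝ V,
      Module.finrank ℝ E = i + 1 ∧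
        s = sSup {r : ℝ | ∃ u ∈ E, u ≠ 0 ∧ r = a u u / b u u}})
    (hlamh : ∀ i : ℕ, lamh i = sInf {s : ℝ | ∃ E : Submodule ℝ V, E ≤ Vh ∧
      Module.finrank ℝ E = i + 1 ∧
        s = sSup {r : ℝ | ∃ u ∈ E, u ≠ 0 ∧ r = a u u / b u u}}) :
    ∀ i : ℕ, i < n → lamh i / (1 + C ^ 2 * lamh i) ≤ lam i := by
  intro i hi
  obtain ⟨A, rfl⟩ := BilinForm.exists_eq_of_linear_left_of_symm a ha_bilin ha_symm
  obtain ⟨B, rfl⟩ := BilinForm.exists_eq_of_linear_left_of_symm b hb_bilin hb_symm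
  obtain ⟨P, rfl⟩ :=
    BilinForm.exists_linearMap_eq_of_forall_apply_sub_eq_zero ha_pos Ph hPh_mem hPh_orth
  beta_reduce at *
  have hlamh_nonneg : 0 ≤ lamh i := hlamh i ▸ sInf_minmaxSet_nonneg
    (A.apply_self_nonneg_of_pos ha_pos) (B.apply_self_nonneg_of_pos hb_pos) Vh (i + 1)
  obtain ⟨F, -, hF⟩ := Submodule.exists_le_finrank_eq (hn ▸ hi : i + 1 ≤ finrank ℝ Vh)
  rw [hlam i]
  refine le_csInf ⟨_, F, hF, rfl⟩ ?_
  rintro _ ⟨E, hE, rfl⟩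
  refine div_one_add_mul_le_of_mul_one_sub_le hlamh_nonneg (sq_nonneg C) ?_
  rw [hlamh i]
  exact sInf_minmaxSet_mul_one_sub_le ha_pos ha_symm hb_pos hb_symm hPh_mem
    (fun u => hPh_orth u _ (hPh_mem u)) herr i.succ_pos hE

/-- Liu's eigenvalue bound (Theorem 2.1 of Liu 2015): for symmetric coercive
bilinear forms `a`, `b` on a separable Hilbert space `V` with `‖·‖_b` compact
relative to `‖·‖_a`, a finite-dimensional subspace `V_h` with `a`-orthogonal
projection `P_h` satisfying `‖u − P_h u‖_b ≤ C‖u − P_h u‖_a`, the eigenvalues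
(characterized by the Courant–Fischer min–max principle) of the continuous and
discrete variational eigenproblems satisfy
`λ_i ≥ λ_{h,i}/(1 + C² λ_{h,i})` for `i = 1, …, n = dim V_h`. -/
theorem stmt_4 {V : Type*} [NormedAddCommGroup V] [InnerProductSpace ℝ V] [CompleteSpace V]
    [TopologicalSpace.SeparableSpace V]
    (a b : V → V → ℝ)
    (ha_bilin : ∀ (c : ℝ) (u v w : V), a (c • u + v) w = c * a u w + a v w)
    (hb_bilin : ∀ (c : ℝ) (u v w : V), b (c • u + v) w = c * b u w + b v w)
    (ha_symm : ∀ u v, a u v = a v u) (hb_symm : ∀ u v, b u v = b v u)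
    (ha_pos : ∀ u, u ≠ 0 → 0 < a u u) (hb_pos : ∀ u, u ≠ 0 → 0 < b u u)
    (hcompact : ∀ u : ℕ → V, (∃ Cb : ℝ, ∀ n, a (u n) (u n) ≤ Cb) →
      ∃ φ : ℕ → ℕ, StrictMono φ ∧ ∃ l : V,
        Filter.Tendsto (fun n => b (u (φ n) - l) (u (φ n) - l)) Filter.atTop (nhds 0))
    (Vh : Submodule ℝ V) [FiniteDimensional ℝ Vh]
    (n : ℕ) (hn : n = Module.finrank ℝ Vh)
    (Ph : V → V) (hPh_mem : ∀ u, Ph u ∈ Vh)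
    (hPh_orth : ∀ u : V, ∀ vh ∈ Vh, a (u - Ph u) vh = 0)
    (C : ℝ) (hC : 0 ≤ C)
    (herr : ∀ u : V,
      Real.sqrt (b (u - Ph u) (u - Ph u)) ≤ C * Real.sqrt (a (u - Ph u) (u - Ph u)))
    (lam lamh : ℕ → ℝ)
    (hlam : ∀ i : ℕ, lam i = sInf {s : ℝ | ∃ E : Submodule ℝ V,
      Module.finrank ℝ E = i + 1 ∧
        s = sSup {r : ℝ | ∃ u ∈ E, u ≠ 0 ∧ r = a u u / b u u}})
    (hlamh : ∀ i : ℕ, lamh i = sInf {s : ℝ | ∃ E : Submodule ℝ V, E ≤ Vh ∧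
      Module.finrank ℝ E = i + 1 ∧
        s = sSup {r : ℝ | ∃ u ∈ E, u ≠ 0 ∧ r = a u u / b u u}}) :
    ∀ i : ℕ, i < n → lamh i / (1 + C ^ 2 * lamh i) ≤ lam i :=
  stmt_4_general a b ha_bilin hb_bilin ha_symm hb_symm ha_pos hb_pos Vh n hn Ph hPh_mem hPh_orth C
    herr lam lamh hlam hlamh
end
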